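/- arXiv:1712.04635 — 6 statements merged into one kernel-verified Lean document; each statement's English description precedes it below -/
import Mathlib

section
/- For every integer m ≥ 1, the identity ξ_{m+1} = (1 − x·y)·ξ_m + x^m·(1 − y)^{m+1} holds in ℤ[x,y]. -/
open MvPolynomial Finset

/-- The polynomial `ξ_m ∈ ℤ[x,y]`, where `X 0` plays the role of `x` and `X 1` of `y`:
`ξ_m = (−1)^m x^m y^(m+1) + Σ_{j=0}^{m−1} Σ_{i=j}^{m−1} (−1)^j C(m+1,j) x^i y^j`. -/
noncomputable def xi (m : ℕ) : MvPolynomial (Fin 2) ℤ :=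
  (-1) ^ m * X 0 ^ m * X 1 ^ (m + 1) +
    ∑ j ∈ Finset.range m, ∑ i ∈ Finset.Icc j (m - 1),
      (-1) ^ j * ((m + 1).choose j : MvPolynomial (Fin 2) ℤ) * X 0 ^ i * X 1 ^ j

/-! Multiplying by `1 - x` telescopes the inner geometric sums of `ξ_m`, and the outer sums are
then truncated binomial expansions; this gives the closed form
`(1 - x) ξ_m = (1 - x y)^(m+1) - x^m (1 - y)^(m+1)`. The recurrence is an identity between these
closed forms, and `1 - x` can be cancelled since `ℤ[x,y]` is a domain. -/

section ClosedForm

variable {R : Type*} [CommRing R]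

theorem one_sub_mul_geom_sum_Icc_pred (x : R) {j m : ℕ} (h : j < m) :
    (1 - x) * ∑ i ∈ Icc j (m - 1), x ^ i = x ^ j - x ^ m := by
  obtain ⟨n, rfl⟩ := Nat.exists_eq_add_of_lt h
  rw [show j + n + 1 - 1 = j + n by lia, ← Ico_add_one_right_eq_Icc, mul_comm,
    geom_sum_Ico_mul_neg x (by lia)]

theorem sum_range_neg_one_pow_mul_choose_mul_pow (t : R) (m : ℕ) :
    ∑ j ∈ range m, (-1) ^ j * ((m + 1).choose j : R) * t ^ j =
      (1 - t) ^ (m + 1) - (-1) ^ m * (m + 1) * t ^ m + (-1) ^ m * t ^ (m + 1) := by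
  have binomial :
      (1 - t) ^ (m + 1) = ∑ j ∈ range (m + 2), (-1) ^ j * ((m + 1).choose j : R) * t ^ j := by
    rw [sub_eq_add_neg, add_comm, add_pow]
    refine sum_congr rfl fun j _ => ?_
    rw [one_pow, neg_pow]
    ring
  rw [binomial, sum_range_succ, sum_range_succ, Nat.choose_succ_self_right, Nat.choose_self]
  push_cast
  ring

theorem one_sub_mul_sum_range_sum_Icc (x y : R) (m : ℕ) :
    (1 - x) * ∑ j ∈ range m, ∑ i ∈ Icc j (m - 1),
        (-1) ^ j * ((m + 1).choose j : R) * x ^ i * y ^ j =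
      ∑ j ∈ range m, (-1) ^ j * ((m + 1).choose j : R) * (x * y) ^ j -
        x ^ m * ∑ j ∈ range m, (-1) ^ j * ((m + 1).choose j : R) * y ^ j := by
  rw [mul_sum, mul_sum, ← sum_sub_distrib]
  refine sum_congr rfl fun j hj => ?_
  have telescope := one_sub_mul_geom_sum_Icc_pred x (mem_range.mp hj)
  have factor : ∑ i ∈ Icc j (m - 1), (-1) ^ j * ((m + 1).choose j : R) * x ^ i * y ^ j =
      (-1) ^ j * ((m + 1).choose j : R) * y ^ j * ∑ i ∈ Icc j (m - 1), x ^ i := by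
    rw [mul_sum]
    exact sum_congr rfl fun _ _ => by ring
  rw [factor]
  linear_combination (-1) ^ j * ((m + 1).choose j : R) * y ^ j * telescope

end ClosedForm

theorem one_sub_X_mul_xi (m : ℕ) :
    (1 - X 0) * xi m = (1 - X 0 * X 1) ^ (m + 1) - X 0 ^ m * (1 - X 1) ^ (m + 1) := by
  rw [xi, mul_add, one_sub_mul_sum_range_sum_Icc, sum_range_neg_one_pow_mul_choose_mul_pow,
    sum_range_neg_one_pow_mul_choose_mul_pow]
  ring

theorem one_sub_X_ne_zero : (1 - X 0 : MvPolynomial (Fin 2) ℤ) ≠ 0 := fun h => by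
  simpa using congrArg (eval 0) h

theorem stmt_0_general (m : ℕ) :
    xi (m + 1) = (1 - X 0 * X 1) * xi m + X 0 ^ m * (1 - X 1) ^ (m + 1) := by
  refine mul_left_cancel₀ one_sub_X_ne_zero ?_
  linear_combination one_sub_X_mul_xi (m + 1) - (1 - X 0 * X 1) * one_sub_X_mul_xi m

theorem stmt_0 (m : ℕ) (hm : 1 ≤ m) :
    xi (m + 1) = (1 - X 0 * X 1) * xi m + X 0 ^ m * (1 - X 1) ^ (m + 1) :=
  stmt_0_general m
end

section
/- For every integer m ≥ 1, the polynomial ξ_m lies in the m-th power of the ideal of ℤ[x,y] generated by (x − 1) and (y − 1); that is, ξ_m vanishes to order at least m at the point (1,1). -/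
/-!
Multiplying by `x - 1` telescopes the inner geometric sums of `ξ_m`:
`(x - 1) ξ_m = x^m (1 - y)^(m+1) - (1 - x y)^(m+1)`.
Expanding `1 - x y = (1 - x) + x (1 - y)` binomially writes the right-hand side as `x - 1` times
a combination of the products `(1 - x)^k (1 - y)^(m-k)` and of `(1 - y)^(m+1)`, all in the `m`-th
power of the ideal. Since `x - 1` is not a zero divisor in `ℤ[x,y]`, this is `ξ_m` itself.
-/

open MvPolynomial Finset

theorem Ideal.pow_mul_pow_sub_mem_pow {S : Type*} [CommSemiring S] {I : Ideal S} {a b : S}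
    (ha : a ∈ I) (hb : b ∈ I) {k m : ℕ} (hk : k ≤ m) : a ^ k * b ^ (m - k) ∈ I ^ m :=
  pow_mul_pow_sub I hk ▸ Ideal.mul_mem_mul (Ideal.pow_mem_pow ha k) (Ideal.pow_mem_pow hb _)

section CommRing

variable {R : Type*} [CommRing R]

theorem one_sub_pow_eq_sum (y : R) (n : ℕ) :
    (1 - y) ^ n = ∑ j ∈ range (n + 1), (-1) ^ j * (n.choose j : R) * y ^ j := by
  rw [sub_eq_neg_add, add_pow]
  exact sum_congr rfl fun j _ => by rw [neg_pow]; ring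

theorem sub_one_mul_geom_sum_Icc (x : R) {j m : ℕ} (h : j < m) :
    (x - 1) * ∑ i ∈ Icc j (m - 1), x ^ i = x ^ m - x ^ j := by
  rw [Icc_sub_one_right_eq_Ico_of_not_isMin (not_isMin_of_lt h), mul_comm,
    geom_sum_Ico_mul x h.le]

theorem sub_one_mul_xi_formula (x y : R) (m : ℕ) :
    (x - 1) * ((-1) ^ m * x ^ m * y ^ (m + 1) + ∑ j ∈ range m, ∑ i ∈ Icc j (m - 1),
        (-1) ^ j * ((m + 1).choose j : R) * x ^ i * y ^ j) =
      x ^ m * (1 - y) ^ (m + 1) - (1 - x * y) ^ (m + 1) := by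
  have inner : ∀ j ∈ range m,
      (x - 1) * ∑ i ∈ Icc j (m - 1), (-1) ^ j * ((m + 1).choose j : R) * x ^ i * y ^ j =
        x ^ m * ((-1) ^ j * ((m + 1).choose j : R) * y ^ j) -
          (-1) ^ j * ((m + 1).choose j : R) * (x * y) ^ j := by
    intro j hj
    have hgeom := sub_one_mul_geom_sum_Icc x (mem_range.1 hj)
    simp only [← sum_mul, ← mul_sum]
    linear_combination (-1) ^ j * ((m + 1).choose j : R) * y ^ j * hgeom
  rw [one_sub_pow_eq_sum, one_sub_pow_eq_sum, mul_sum, ← sum_sub_distrib, sum_range_succ,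
    sum_range_succ, mul_add, mul_sum, sum_congr rfl inner, Nat.choose_self, Nat.cast_one]
  ring

/-- `ξ_m` rewritten in powers of `1 - x` and `1 - y`; every term visibly has order at least `m`
at `(1, 1)`. -/
def xiExpansion (x y : R) (m : ℕ) : R :=
  ∑ k ∈ range (m + 1), ((m + 1).choose (k + 1) : R) * (1 - x) ^ k * (x * (1 - y)) ^ (m - k) -
    x ^ m * (1 - y) ^ (m + 1)

theorem sub_one_mul_xiExpansion (x y : R) (m : ℕ) :
    (x - 1) * xiExpansion x y m = x ^ m * (1 - y) ^ (m + 1) - (1 - x * y) ^ (m + 1) := by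
  have hsplit : 1 - x * y = (1 - x) + x * (1 - y) := by ring
  have shift : ∀ k ∈ range (m + 1),
      (1 - x) ^ (k + 1) * (x * (1 - y)) ^ (m + 1 - (k + 1)) * ((m + 1).choose (k + 1) : R) =
        (1 - x) * (((m + 1).choose (k + 1) : R) * (1 - x) ^ k * (x * (1 - y)) ^ (m - k)) :=
    fun k _ => by rw [Nat.add_sub_add_right]; ring
  rw [hsplit, add_pow, sum_range_succ', sum_congr rfl shift, ← mul_sum, xiExpansion]
  simp only [pow_zero, Nat.sub_zero, Nat.choose_zero_right, Nat.cast_one, mul_pow]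
  ring

theorem xiExpansion_mem_span_pow (x y : R) (m : ℕ) :
    xiExpansion x y m ∈ Ideal.span {x - 1, y - 1} ^ m := by
  set I : Ideal R := Ideal.span {x - 1, y - 1}
  have hx : 1 - x ∈ I := neg_sub x 1 ▸ I.neg_mem (Ideal.subset_span (by simp))
  have hy : 1 - y ∈ I := neg_sub y 1 ▸ I.neg_mem (Ideal.subset_span (by simp))
  refine sub_mem (sum_mem fun k hk => ?_) ?_
  · have hterm := Ideal.pow_mul_pow_sub_mem_pow hx hy (Nat.lt_succ_iff.1 (mem_range.1 hk))
    convert (I ^ m).mul_mem_left (((m + 1).choose (k + 1) : R) * x ^ (m - k)) hterm using 1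
    rw [mul_pow]
    ring
  · exact (I ^ m).mul_mem_left _ (Ideal.pow_le_pow_right m.le_succ (Ideal.pow_mem_pow hy _))

end CommRing

theorem xi_eq_xiExpansion (m : ℕ) : xi m = xiExpansion (X 0) (X 1) m := by
  have hne : (X 0 - 1 : MvPolynomial (Fin 2) ℤ) ≠ 0 := fun h => by
    simpa using congrArg (eval 0) h
  apply mul_left_cancel₀ hne
  rw [xi, sub_one_mul_xi_formula, sub_one_mul_xiExpansion]

theorem stmt_2_general (m : ℕ) :
    xi m ∈ (Ideal.span {X 0 - 1, X 1 - 1} : Ideal (MvPolynomial (Fin 2) ℤ)) ^ m :=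
  xi_eq_xiExpansion m ▸ xiExpansion_mem_span_pow (X 0) (X 1) m

theorem stmt_2 (m : ℕ) (hm : 1 ≤ m) :
    xi m ∈ (Ideal.span {X 0 - 1, X 1 - 1} : Ideal (MvPolynomial (Fin 2) ℤ)) ^ m :=
  stmt_2_general m
end

section
/- For every integer m ≥ 1, the convex hull in ℝ² of the set {(i,j) ∈ ℕ² : the coefficient of x^i·y^j in ξ_m is nonzero} equals the convex hull of the three points (0,0), (m−1,0), (m,m+1); that is, the Newton polygon of ξ_m is the triangle with vertices (0,0), (m−1,0), (m,m+1). -/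
/-!
The coefficient of `x^i y^j` in `ξ_m` is `(-1)^m` at `(m, m+1)`, `(-1)^j C(m+1, j)` when
`j ≤ i < m`, and zero otherwise; since `C(m+1, j) ≠ 0` for `j < m`, the support is the lattice
triangle `{j ≤ i < m}` plus the apex `(m, m+1)`. Its corners `(0,0)`, `(m-1,0)` and the apex are
in the support, and every lattice point of `{j ≤ i < m}` is an explicit convex combination of
these three points.
-/

open MvPolynomial Finset

theorem single_zero_add_single_one_inj {i j i' j' : ℕ} :
    Finsupp.single (0 : Fin 2) i + Finsupp.single 1 j =
        Finsupp.single 0 i' + Finsupp.single 1 j' ↔ i = i' ∧ j = j' := by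
  refine ⟨fun h => ⟨?_, ?_⟩, fun ⟨hi, hj⟩ => hi ▸ hj ▸ rfl⟩
  · simpa using DFunLike.congr_fun h 0
  · simpa using DFunLike.congr_fun h 1

theorem coeff_C_mul_X_zero_pow_mul_X_one_pow {R : Type*} [CommSemiring R] (a : R)
    (i j i' j' : ℕ) :
    coeff (Finsupp.single 0 i + Finsupp.single 1 j) (C a * X 0 ^ i' * X 1 ^ j' :
        MvPolynomial (Fin 2) R) = if j' = j ∧ i' = i then a else 0 := by
  rw [X_pow_eq_monomial, X_pow_eq_monomial, C_mul_monomial, monomial_mul, coeff_monomial]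
  simp [single_zero_add_single_one_inj, and_comm]

theorem coeff_xi (m i j : ℕ) :
    coeff (Finsupp.single 0 i + Finsupp.single 1 j) (xi m) =
      (if i = m ∧ j = m + 1 then (-1) ^ m else 0) +
        if j ≤ i ∧ i < m then (-1) ^ j * ((m + 1).choose j : ℤ) else 0 := by
  have hC (k n : ℕ) : ((-1) ^ k * (n : MvPolynomial (Fin 2) ℤ)) = C ((-1) ^ k * (n : ℤ)) := by
    simp
  have hsign : ((-1) ^ m : MvPolynomial (Fin 2) ℤ) = C ((-1) ^ m) := by simp
  simp only [xi, coeff_add, coeff_sum, hC, hsign, coeff_C_mul_X_zero_pow_mul_X_one_pow]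
  congr 1
  · simp only [eq_comm, and_comm]
  · simp only [ite_and, sum_ite_irrel, sum_const_zero, sum_ite_eq', mem_Icc, mem_range]
    split_ifs <;> first | rfl | omega

theorem coeff_xi_ne_zero_iff (m i j : ℕ) :
    coeff (Finsupp.single 0 i + Finsupp.single 1 j) (xi m) ≠ 0 ↔
      (i = m ∧ j = m + 1) ∨ (j ≤ i ∧ i < m) := by
  rw [coeff_xi]
  by_cases htop : i = m ∧ j = m + 1
  · simp [htop]
  · have hchoose : j ≤ i → i < m → (m + 1).choose j ≠ 0 :=
      fun hji him => (Nat.choose_pos (by omega)).ne'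
    simpa [htop] using hchoose

theorem mem_convexHull_triple {𝕜 E : Type*} [Field 𝕜] [LinearOrder 𝕜] [IsStrictOrderedRing 𝕜]
    [AddCommGroup E] [Module 𝕜 E] {A B C p : E} {a b c : 𝕜}
    (ha : 0 ≤ a) (hb : 0 ≤ b) (hc : 0 ≤ c) (habc : a + b + c = 1)
    (hp : a • A + b • B + c • C = p) : p ∈ convexHull 𝕜 {A, B, C} := by
  have := (convex_convexHull 𝕜 {A, B, C}).sum_mem (t := univ) (w := ![a, b, c]) (z := ![A, B, C])
    (by simp [Fin.forall_fin_succ, ha, hb, hc]) (by simpa [Fin.sum_univ_three] using habc)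
    (fun i _ => subset_convexHull 𝕜 _ (by fin_cases i <;> simp))
  simpa [Fin.sum_univ_three, hp] using this

theorem mem_convexHull_triangle {M x y : ℝ} (hy : 0 ≤ y) (hyx : y ≤ x) (hxM : x ≤ M - 1) :
    (x, y) ∈ convexHull ℝ {(0, 0), (M - 1, 0), (M, M + 1)} := by
  -- for `M = 1` the triangle degenerates and only `x = 0` occurs
  rcases (hy.trans hyx).eq_or_lt with hx | hx
  · obtain rfl : y = 0 := by linarith
    exact subset_convexHull ℝ _ (by simp [← hx])
  have hM₁ : 0 < M - 1 := by linarith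
  have hM₂ : 0 < M + 1 := by linarith
  refine mem_convexHull_triple (a := ((M - 1 - x) * (M + 1) + y) / ((M - 1) * (M + 1)))
    (b := (x * (M + 1) - y * M) / ((M - 1) * (M + 1))) (c := y * (M - 1) / ((M - 1) * (M + 1)))
    (div_nonneg (by nlinarith) (by positivity)) (div_nonneg (by nlinarith) (by positivity))
    (by positivity) ?_ ?_
  · field_simp; ring
  · ext <;> simp only [Prod.smul_mk, Prod.mk_add_mk, smul_eq_mul] <;> field_simp <;> ring

theorem stmt_4 (m : ℕ) (hm : 1 ≤ m) :
    convexHull ℝ {p : ℝ × ℝ | ∃ i j : ℕ,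
        MvPolynomial.coeff (Finsupp.single 0 i + Finsupp.single 1 j) (xi m) ≠ 0 ∧
        p = ((i : ℝ), (j : ℝ))} =
      convexHull ℝ {((0 : ℝ), (0 : ℝ)), ((m : ℝ) - 1, (0 : ℝ)), ((m : ℝ), (m : ℝ) + 1)} := by
  simp_rw [coeff_xi_ne_zero_iff]
  apply Set.Subset.antisymm
  · refine convexHull_min ?_ (convex_convexHull ℝ _)
    rintro _ ⟨i, j, ⟨rfl, rfl⟩ | ⟨hji, him⟩, rfl⟩
    · exact subset_convexHull ℝ _ (by simp)
    · have him' : (i : ℝ) + 1 ≤ m := by exact_mod_cast him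
      exact mem_convexHull_triangle (by positivity) (by exact_mod_cast hji) (by linarith)
  · refine convexHull_mono ?_
    rintro _ (rfl | rfl | rfl)
    · exact ⟨0, 0, Or.inr ⟨le_rfl, hm⟩, by simp⟩
    · exact ⟨m - 1, 0, Or.inr ⟨Nat.zero_le _, by omega⟩, by simp [Nat.cast_sub hm]⟩
    · exact ⟨m, m + 1, Or.inl ⟨rfl, rfl⟩, by simp⟩
end

section
/- Let m ≥ 1 be an integer and let α, β be real numbers satisfying the KN(m) bounds. Then α + β < 1/(m+1). (Equivalently, the triangle with vertices (−α,0), (m−1+β,0), (m,m+1) has area strictly less than m²/2, so the curve defined by ξ_m in the blowup is a negative curve.) -/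
open MvPolynomial Finset

/-- The Kurano–Nishida bounds `KN(m)` on a pair of real numbers `(α, β)`:
`0 < α < 1/(1+(m+1)+(m+1)²)` and
`1/(m+2) < β < 1 − 1/(1 + 1/(m+1) + 1/(m+1)² − α/(1−(m+2)α))`. -/
def KNBounds (m : ℕ) (α β : ℝ) : Prop :=
  0 < α ∧ α < 1 / (1 + ((m : ℝ) + 1) + ((m : ℝ) + 1) ^ 2) ∧
  1 / ((m : ℝ) + 2) < β ∧
  β < 1 - 1 / (1 + 1 / ((m : ℝ) + 1) + 1 / ((m : ℝ) + 1) ^ 2 -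
    α / (1 - ((m : ℝ) + 2) * α))

/-
With `M = m + 1` and `s = 1 - (M + 1) α > 0`, the upper bound on `β` reads
`β < 1 - M² s / (Q - R α)` with `Q = 1 + M + M²` and `R = M³ + 3M² + 2M + 1`.
Clearing denominators, `1 - M² s / (Q - R α) < 1/M - α` becomes positivity of the quadratic
`1 - (2M² + 2M + 1) α + R M α²`, whose discriminant `1 - 4M³` is negative.
-/

lemma kn_quadratic_pos {M : ℝ} (hM : 1 ≤ M) (α : ℝ) :
    0 < 1 - (2 * M ^ 2 + 2 * M + 1) * α + M * (M ^ 3 + 3 * M ^ 2 + 2 * M + 1) * α ^ 2 := by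
  have hR : 0 < M * (M ^ 3 + 3 * M ^ 2 + 2 * M + 1) := by positivity
  have hdisc : 0 < 4 * M ^ 3 - 1 := by nlinarith [pow_le_pow_left₀ zero_le_one hM 3]
  nlinarith [sq_nonneg (2 * (M * (M ^ 3 + 3 * M ^ 2 + 2 * M + 1)) * α - (2 * M ^ 2 + 2 * M + 1))]

lemma one_sub_one_div_lt_one_div_sub {M α : ℝ} (hM : 1 ≤ M) (hα : α * (1 + M + M ^ 2) < 1) :
    1 - 1 / (1 + 1 / M + 1 / M ^ 2 - α / (1 - (M + 1) * α)) < 1 / M - α := by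
  have hM0 : 0 < M := by linarith
  have hs : 0 < 1 - (M + 1) * α := by nlinarith
  have hN : 0 < (1 + M + M ^ 2) - (M ^ 3 + 3 * M ^ 2 + 2 * M + 1) * α := by nlinarith
  have hD : 1 + 1 / M + 1 / M ^ 2 - α / (1 - (M + 1) * α) =
      ((1 + M + M ^ 2) - (M ^ 3 + 3 * M ^ 2 + 2 * M + 1) * α) / (M ^ 2 * (1 - (M + 1) * α)) := by
    field_simp
    ring
  rw [hD, one_div_div, sub_lt_comm, show 1 - (1 / M - α) = (M - 1 + M * α) / M by field_simp; ring,
    div_lt_div_iff₀ hM0 hN]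
  nlinarith [kn_quadratic_pos hM α]

theorem stmt_12_general (m : ℕ) (α β : ℝ) (h : KNBounds m α β) :
    α + β < 1 / ((m : ℝ) + 1) := by
  obtain ⟨-, hα, -, hβ⟩ := h
  have hM : (1 : ℝ) ≤ (m : ℝ) + 1 := by linarith [m.cast_nonneg (α := ℝ)]
  rw [show (m : ℝ) + 2 = (m + 1) + 1 by ring] at hβ
  linarith [one_sub_one_div_lt_one_div_sub hM ((lt_div_iff₀ (by positivity)).mp hα)]

theorem stmt_12 (m : ℕ) (hm : 1 ≤ m) (α β : ℝ) (h : KNBounds m α β) :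
    α + β < 1 / ((m : ℝ) + 1) :=
  stmt_12_general m α β h
end

section
/- For every integer m ≥ 1, the rational numbers α = 1/(m+2)² and β = ((m+2)²+1)/((m+2)³+1) satisfy the KN(m) bounds. -/
/-! With `t = m + 2`, the upper bound on `β` simplifies to `(t² - t + 1) / (t³ - t² + 1)`.
Since `t³ + 1 = (t + 1)(t² - t + 1)`, cross-multiplying the last bound leaves a gap of
`t (t - 1) > 0`; the other bounds reduce to `t² - t + 1 < t²` and `t³ + 1 < t³ + t`. -/

open MvPolynomial Finset

lemma one_div_sq_lt_knAlphaBound {x : ℝ} (hx : 0 ≤ x) :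
    1 / (x + 2) ^ 2 < 1 / (1 + (x + 1) + (x + 1) ^ 2) :=
  one_div_lt_one_div_of_lt (by positivity) (by nlinarith)

lemma one_div_lt_sq_add_one_div_cube_add_one {t : ℝ} (ht : 1 < t) :
    1 / t < (t ^ 2 + 1) / (t ^ 3 + 1) := by
  rw [div_lt_div_iff₀ (by linarith) (by positivity)]
  nlinarith

lemma knUpperBound_eq {x : ℝ} (hx : 0 ≤ x) :
    1 - 1 / (1 + 1 / (x + 1) + 1 / (x + 1) ^ 2 -
        1 / (x + 2) ^ 2 / (1 - (x + 2) * (1 / (x + 2) ^ 2)))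
      = ((x + 2) ^ 2 - (x + 2) + 1) / ((x + 2) ^ 3 - (x + 2) ^ 2 + 1) := by
  have hP : (x + 2) ^ 3 - (x + 2) ^ 2 + 1 ≠ 0 := by nlinarith
  have hx1 : x + 1 ≠ 0 := by positivity
  have hx2 : x + 2 ≠ 0 := by positivity
  have hq : 1 - (x + 2) * (1 / (x + 2) ^ 2) = (x + 1) / (x + 2) := by
    field_simp
    ring
  have hD : 1 + 1 / (x + 1) + 1 / (x + 1) ^ 2 - 1 / (x + 2) ^ 2 / ((x + 1) / (x + 2))
      = ((x + 2) ^ 3 - (x + 2) ^ 2 + 1) / ((x + 2) * (x + 1) ^ 2) := by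
    field_simp
    ring
  rw [hq, hD, one_div_div, one_sub_div hP]
  ring

lemma div_lt_knUpperBound {t : ℝ} (ht : 1 < t) :
    (t ^ 2 + 1) / (t ^ 3 + 1) < (t ^ 2 - t + 1) / (t ^ 3 - t ^ 2 + 1) := by
  have hP : 0 < t ^ 3 - t ^ 2 + 1 := by nlinarith
  rw [div_lt_div_iff₀ (by positivity) hP]
  nlinarith

theorem stmt_14_general (m : ℕ) :
    KNBounds m ((1 / ((m : ℚ) + 2) ^ 2 : ℚ) : ℝ)
      (((((m : ℚ) + 2) ^ 2 + 1) / (((m : ℚ) + 2) ^ 3 + 1) : ℚ) : ℝ) := by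
  have hm : (0 : ℝ) ≤ m := m.cast_nonneg
  have ht : (1 : ℝ) < m + 2 := by linarith
  unfold KNBounds
  push_cast
  rw [knUpperBound_eq hm]
  exact ⟨by positivity, one_div_sq_lt_knAlphaBound hm,
    one_div_lt_sq_add_one_div_cube_add_one ht, div_lt_knUpperBound ht⟩

theorem stmt_14 (m : ℕ) (hm : 1 ≤ m) :
    KNBounds m ((1 / ((m : ℚ) + 2) ^ 2 : ℚ) : ℝ)
      (((((m : ℚ) + 2) ^ 2 + 1) / (((m : ℚ) + 2) ^ 3 + 1) : ℚ) : ℝ) :=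
  stmt_14_general m
end

section
/- For every integer m ≥ 1 and every pair (i,j) ∈ ℕ² such that the coefficient of x^i·y^j in ξ_{m+1} is nonzero, the inequalities (m+2)·(i − m) ≤ j and (m+2)·i ≥ (m+1)·j hold. (Equivalently, the Newton polygon of ξ_{m+1} is contained in the triangle with base [0,m] on the x-axis whose left and right edges have slopes (m+1)/(m + 1/(m+2)) and (m+1)/(1 − 1/(m+2)) respectively; this is the content of the paper's remark that when β ≤ 1/(m+2) the polynomial ξ_{m+1} defines a curve disjoint from the negative curve, so the blowup is a Mori Dream Space.) -/
open MvPolynomial Finset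

/-! The Newton polygon of `ξ_n` is the triangle with vertices `(0,0)`, `(n-1,0)`, `(n-1,n-1)`
together with the isolated point `(n, n+1)`; the claimed inequalities hold at each of these. -/

theorem coeff_single_add_single_C_mul_X_pow_mul_X_pow {R : Type*} [CommSemiring R]
    (c : R) (a b i j : ℕ) :
    coeff (Finsupp.single 0 i + Finsupp.single 1 j)
      (C c * X 0 ^ a * X 1 ^ b : MvPolynomial (Fin 2) R) = if i = a ∧ j = b then c else 0 := by
  rw [mul_assoc, X_pow_eq_monomial, X_pow_eq_monomial, monomial_mul, one_mul, C_mul_monomial,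
    mul_one, coeff_monomial]
  congr 1
  refine propext ⟨fun h => ?_, fun ⟨hi, hj⟩ => hi ▸ hj ▸ rfl⟩
  have h0 := DFunLike.congr_fun h 0
  have h1 := DFunLike.congr_fun h 1
  simp only [Finsupp.add_apply, Finsupp.single_apply] at h0 h1
  simp_all

theorem xi_eq_sum_C_mul (n : ℕ) :
    xi n = C ((-1) ^ n) * X 0 ^ n * X 1 ^ (n + 1) +
      ∑ j ∈ range n, ∑ i ∈ Icc j (n - 1),
        C ((-1) ^ j * ((n + 1).choose j : ℤ)) * X 0 ^ i * X 1 ^ j := by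
  simp only [xi, map_mul, map_pow, map_neg, map_one, map_natCast]

theorem exponents_of_coeff_xi_ne_zero {n i j : ℕ}
    (hc : coeff (Finsupp.single 0 i + Finsupp.single 1 j) (xi n) ≠ 0) :
    (i = n ∧ j = n + 1) ∨ (j ≤ i ∧ i < n) := by
  by_contra h
  refine hc ?_
  rw [xi_eq_sum_C_mul, coeff_add, coeff_single_add_single_C_mul_X_pow_mul_X_pow,
    if_neg (fun h' => h (Or.inl h')), zero_add, coeff_sum]
  refine sum_eq_zero fun j' hj' => ?_
  rw [coeff_sum]
  refine sum_eq_zero fun i' hi' => ?_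
  rw [coeff_single_add_single_C_mul_X_pow_mul_X_pow, if_neg]
  rintro ⟨rfl, rfl⟩
  simp only [mem_Icc, mem_range] at hi' hj'
  omega

theorem stmt_16_general (m : ℕ) (i j : ℕ)
    (hc : MvPolynomial.coeff (Finsupp.single 0 i + Finsupp.single 1 j) (xi (m + 1)) ≠ 0) :
    ((m : ℤ) + 2) * ((i : ℤ) - (m : ℤ)) ≤ (j : ℤ) ∧
      ((m : ℤ) + 2) * (i : ℤ) ≥ ((m : ℤ) + 1) * (j : ℤ) := by
  rcases exponents_of_coeff_xi_ne_zero hc with ⟨rfl, rfl⟩ | ⟨hji, hi⟩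
  · constructor <;> push_cast <;> nlinarith
  · constructor <;> nlinarith

theorem stmt_16 (m : ℕ) (hm : 1 ≤ m) (i j : ℕ)
    (hc : MvPolynomial.coeff (Finsupp.single 0 i + Finsupp.single 1 j) (xi (m + 1)) ≠ 0) :
    ((m : ℤ) + 2) * ((i : ℤ) - (m : ℤ)) ≤ (j : ℤ) ∧
      ((m : ℤ) + 2) * (i : ℤ) ≥ ((m : ℤ) + 1) * (j : ℤ) :=
  stmt_16_general m i j hc
end
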